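/- Let λ, μ be partitions of n with λ > μ in dominance order, let i be the least index with λ_i > μ_i and j > i the least index with equal partial sums λ₁+...+λ_j = μ₁+...+μ_j. Then the sequence ν obtained from μ by increasing μ_i by 1 and decreasing μ_j by 1 is again a partition of n, and λ ≥ ν > μ. -/

import Mathlib

/-- The parts of a partition sorted in weakly decreasing order. -/
def partsList {n : ℕ} (p : Nat.Partition n) : List ℕ := p.parts.sort (· ≥ ·)

/-- The `i`-th part (1-indexed) of a partition, with the convention that
`part p i = 0` for `i` beyond the length. -/
def part {n : ℕ} (p : Nat.Partition n) (i : ℕ) : ℕ := (partsList p).getD (i - 1) 0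

/-- The partial sum `λ₁ + ⋯ + λ_j`. -/
def psum {n : ℕ} (p : Nat.Partition n) (j : ℕ) : ℕ := ∑ i ∈ Finset.range j, part p (i + 1)

/-- Dominance ordering: `Dominates l m` means `l ≥ m`, i.e. every partial sum of `l`
is at least the corresponding partial sum of `m`. -/
def Dominates {n : ℕ} (l m : Nat.Partition n) : Prop := ∀ j, psum m j ≤ psum l j

/-- Strict dominance: `l > m`. -/
def SDom {n : ℕ} (l m : Nat.Partition n) : Prop := Dominates l m ∧ l ≠ m

/-- The number of (nonzero) parts of a partition. -/
def plen {n : ℕ} (p : Nat.Partition n) : ℕ := Multiset.card p.parts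

/-- `l` covers `m` in the dominance order: `l > m` and nothing strictly in between. -/
def Covers {n : ℕ} (l m : Nat.Partition n) : Prop :=
  SDom l m ∧ ¬ ∃ ν : Nat.Partition n, SDom l ν ∧ SDom ν m


/-!
Let `i` be the first row where `λ` exceeds `μ` and `j > i` the first later row where the partial
sums meet again. Then `μ_i < λ_i ≤ λ_{i-1} ≤ μ_{i-1}` and `μ_{j+1} ≤ λ_{j+1} ≤ λ_j < μ_j`, so
moving one box of `μ` from row `j` up to row `i` keeps the rows weakly decreasing. This raises
exactly the partial sums `ν₁ + ⋯ + ν_k` with `i ≤ k < j` by one, and those are precisely the ones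
where `λ` is strictly ahead of `μ`.
-/

open Finset

lemma List.sum_range_length_getD (L : List ℕ) :
    ∑ k ∈ Finset.range L.length, L.getD k 0 = L.sum := by
  rw [Finset.sum_range, ← Fin.sum_univ_getElem]
  simp

section PartitionRows

variable {n : ℕ} (p : Nat.Partition n)

lemma partsList_coe : (partsList p : Multiset ℕ) = p.parts := Multiset.sort_eq _ _

lemma length_partsList : (partsList p).length = plen p := Multiset.length_sort _

lemma partsList_eq_of_pairwise {L : List ℕ} (hL : L.Pairwise (· ≥ ·)) (hp : p.parts = L) :
    partsList p = L :=
  (Multiset.coe_eq_coe.mp (by rw [partsList_coe, hp])).eq_of_pairwise'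
    (Multiset.pairwise_sort _ _) hL

/-- `part p 0 = part p 1` because of the truncated subtraction in `part`. -/
lemma part_antitone : Antitone (part p) := by
  intro a b hab
  unfold part
  by_cases hb : b - 1 < (partsList p).length
  · rw [List.getD_eq_getElem _ _ hb, List.getD_eq_getElem _ _ (show a - 1 < _ by omega)]
    rcases (show a - 1 ≤ b - 1 by omega).eq_or_lt with h | h
    · simp only [h, le_refl]
    · have hsorted : (partsList p).Pairwise (· ≥ ·) := Multiset.pairwise_sort _ _
      exact List.pairwise_iff_getElem.mp hsorted _ _ (by omega) hb h
  · rw [List.getD_eq_default _ _ (by omega)]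
    exact Nat.zero_le _

lemma part_eq_zero_of_plen_lt {k : ℕ} (hk : plen p < k) : part p k = 0 :=
  List.getD_eq_default _ _ (by rw [length_partsList]; omega)

lemma psum_succ (k : ℕ) : psum p (k + 1) = psum p k + part p (k + 1) :=
  Finset.sum_range_succ _ _

lemma psum_plen : psum p (plen p) = n := by
  simp only [psum, part, Nat.add_sub_cancel]
  rw [← length_partsList, List.sum_range_length_getD, ← Multiset.sum_coe, partsList_coe,
    p.parts_sum]

end PartitionRows

lemma part_succ_succ_lt_of_psum_lt_of_psum_succ_eq {n : ℕ} {l m : Nat.Partition n}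
    (hdom : Dominates l m) {k : ℕ} (hlt : psum m k < psum l k)
    (heq : psum l (k + 1) = psum m (k + 1)) : part m (k + 1 + 1) < part m (k + 1) := by
  have hnext := hdom (k + 1 + 1)
  rw [psum_succ l (k + 1), psum_succ m (k + 1), heq] at hnext
  rw [psum_succ, psum_succ] at heq
  calc part m (k + 1 + 1) ≤ part l (k + 1 + 1) := by omega
    _ ≤ part l (k + 1) := part_antitone l (k + 1).le_succ
    _ < part m (k + 1) := by omega

lemma exists_part_eq_of_antitone {n : ℕ} {g : ℕ → ℕ} (hg : Antitone g) {N : ℕ} (hN : g N = 0)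
    (hsum : ∑ k ∈ range N, g k = n) : ∃ p : Nat.Partition n, ∀ k, part p (k + 1) = g k := by
  classical
  have hzero : ∃ M, g M = 0 := ⟨N, hN⟩
  set M := Nat.find hzero
  have hg_eq_zero : ∀ k, M ≤ k → g k = 0 := fun k hk =>
    Nat.eq_zero_of_le_zero ((hg hk).trans (Nat.find_spec hzero).le)
  set L := (List.range M).map g
  have hpos : ∀ {x}, x ∈ (L : Multiset ℕ) → 0 < x := by
    intro x hx
    obtain ⟨k, hk, rfl⟩ := List.mem_map.mp (Multiset.mem_coe.mp hx)
    exact Nat.pos_of_ne_zero (Nat.find_min hzero (List.mem_range.mp hk))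
  have hLsum : (L : Multiset ℕ).sum = n := by
    rw [Multiset.sum_coe, ← hsum]
    exact Finset.sum_subset (range_subset_range.mpr (Nat.find_min' hzero hN))
      (fun k _ hk => hg_eq_zero k (not_lt.mp (Finset.mem_range.not.mp hk)))
  have hsorted : L.Pairwise (· ≥ ·) :=
    List.pairwise_map.mpr (List.pairwise_lt_range.imp fun h => hg h.le)
  refine ⟨⟨L, hpos, hLsum⟩, fun k => ?_⟩
  rw [part, partsList_eq_of_pairwise _ hsorted rfl, Nat.add_sub_cancel]
  rcases lt_or_ge k M with hk | hk
  · simp [L, hk]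
  · simp [L, hk, hg_eq_zero k hk]

lemma exists_move_box {n : ℕ} (m : Nat.Partition n) {i j : ℕ} (hi1 : 1 ≤ i) (hij : i < j)
    (hi : 1 < i → part m i < part m (i - 1)) (hj : part m (j + 1) < part m j) :
    ∃ nu : Nat.Partition n,
      (∀ k, 1 ≤ k → part nu k =
        if k = i then part m k + 1 else if k = j then part m k - 1 else part m k) ∧
      ∀ K, psum nu K = if i ≤ K ∧ K < j then psum m K + 1 else psum m K := by
  set g : ℕ → ℕ := fun k =>
    if k + 1 = i then part m (k + 1) + 1 else if k + 1 = j then part m (k + 1) - 1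
    else part m (k + 1)
  have hg : Antitone g := by
    refine antitone_nat_of_succ_le fun k => ?_
    have hmono : part m (k + 1 + 1) ≤ part m (k + 1) := part_antitone m (k + 1).le_succ
    have hi' : k + 1 + 1 = i → part m (k + 1 + 1) < part m (k + 1) := by
      rintro rfl; exact hi (by omega)
    have hj' : k + 1 = j → part m (k + 1 + 1) < part m (k + 1) := by
      rintro rfl; exact hj
    simp only [g]
    split_ifs <;> omega
  have hsum : ∀ K, ∑ k ∈ range K, g k = if i ≤ K ∧ K < j then psum m K + 1 else psum m K := by
    intro K
    induction K with
    | zero => rw [if_neg (by omega)]; rfl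
    | succ K ih =>
      have hj' : K + 1 = j → 1 ≤ part m (K + 1) := by
        rintro rfl; omega
      rw [Finset.sum_range_succ, ih, psum_succ]
      simp only [g]
      split_ifs <;> omega
  have hjlen : j ≤ plen m := by
    by_contra h
    have := part_eq_zero_of_plen_lt m (show plen m < j by omega)
    omega
  have hgplen : g (plen m) = 0 := by
    simp only [g, if_neg (show plen m + 1 ≠ i by omega), if_neg (show plen m + 1 ≠ j by omega)]
    exact part_eq_zero_of_plen_lt m (by omega)
  obtain ⟨nu, hnu⟩ := exists_part_eq_of_antitone hg hgplen
    (by rw [hsum, if_neg (by omega), psum_plen])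
  refine ⟨nu, fun k hk => ?_, fun K => ?_⟩
  · obtain ⟨k, rfl⟩ : ∃ k', k = k' + 1 := ⟨k - 1, by omega⟩
    exact hnu k
  · rw [← hsum]
    exact Finset.sum_congr rfl fun k _ => hnu k

theorem intermediate_partition_general (n : ℕ) (l m : Nat.Partition n)
    (hdom : Dominates l m) (i j : ℕ)
    (hi1 : 1 ≤ i) (hi : part m i < part l i)
    (himin : ∀ k, 1 ≤ k → k < i → ¬ part m k < part l k)
    (hij : i < j) (hj : psum l j = psum m j)
    (hjmin : ∀ k, i < k → k < j → psum l k ≠ psum m k) :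
    ∃ nu : Nat.Partition n,
      (∀ k, 1 ≤ k → part nu k =
        if k = i then part m k + 1 else if k = j then part m k - 1 else part m k) ∧
      Dominates l nu ∧ SDom nu m := by
  have hahead : ∀ k, i ≤ k → k < j → psum m k < psum l k := by
    intro k hik hkj
    rcases hik.eq_or_lt with rfl | hik
    · obtain ⟨i', rfl⟩ : ∃ i', i = i' + 1 := ⟨i - 1, by omega⟩
      rw [psum_succ, psum_succ]
      exact Nat.add_lt_add_of_le_of_lt (hdom i') hi
    · exact (hdom k).lt_of_ne (hjmin k hik hkj).symm
  have hrow_i : 1 < i → part m i < part m (i - 1) := fun h =>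
    calc part m i < part l i := hi
      _ ≤ part l (i - 1) := part_antitone l (Nat.sub_le i 1)
      _ ≤ part m (i - 1) := not_lt.mp (himin (i - 1) (by omega) (by omega))
  have hrow_j : part m (j + 1) < part m j := by
    obtain ⟨k, rfl⟩ : ∃ k, j = k + 1 := ⟨j - 1, by omega⟩
    exact part_succ_succ_lt_of_psum_lt_of_psum_succ_eq hdom (hahead k (by omega) (by omega)) hj
  obtain ⟨nu, hpart, hpsum⟩ := exists_move_box m hi1 hij hrow_i hrow_j
  refine ⟨nu, hpart, fun k => ?_, ⟨fun k => ?_, fun h => ?_⟩⟩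
  · rw [hpsum]
    split_ifs with hk
    · exact hahead k hk.1 hk.2
    · exact hdom k
  · rw [hpsum]
    split_ifs <;> omega
  · have := hpart i hi1
    rw [h, if_pos rfl] at this
    omega

/-- If `λ > μ` in dominance order, `i` the least index with `λ_i > μ_i`, `j > i` the
least index with equal partial sums, then increasing `μ_i` by one and decreasing `μ_j`
by one yields a partition `ν` of `n` with `λ ≥ ν > μ`. -/
theorem intermediate_partition (n : ℕ) (l m : Nat.Partition n)
    (hdom : Dominates l m) (hne : l ≠ m) (i j : ℕ)
    (hi1 : 1 ≤ i) (hi : part m i < part l i)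
    (himin : ∀ k, 1 ≤ k → k < i → ¬ part m k < part l k)
    (hij : i < j) (hj : psum l j = psum m j)
    (hjmin : ∀ k, i < k → k < j → psum l k ≠ psum m k) :
    ∃ nu : Nat.Partition n,
      (∀ k, 1 ≤ k → part nu k =
        if k = i then part m k + 1 else if k = j then part m k - 1 else part m k) ∧
      Dominates l nu ∧ SDom nu m :=
  intermediate_partition_general n l m hdom i j hi1 hi himin hij hj hjmin
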